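/- arXiv:2509.03672 — 2 statements merged into one kernel-verified Lean document; each statement's English description precedes it below -/
import Mathlib

section
/- Gibbs distributions are Lipschitz in their rewards: for rewards r, r' : Y → ℝ on a finite set Y, reference π_ref with full support, and β > 0, the induced Gibbs distributions ν_r and ν_{r'} satisfy ‖ν_r − ν_{r'}‖₁ ≤ (2/β) · max_y |r(y) − r'(y)|. -/
/-!
With `w = πref · exp (r / β)`, `v = πref · exp (r' / β)` and normalisers `W`, `V`, one has
`ν y - ν' y = ∑ z, (w y * v z - v y * w z) / (W * V)`. Each cross term is
`πref y * πref z * (exp a - exp b)` with `|a - b| ≤ 2 M / β`, where `M = max |r - r'|`, and the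
inequality `|exp a - exp b| ≤ |a - b| / 2 * (exp a + exp b)` (that is, `sinh x ≤ x cosh x`)
bounds it by `M / β * (w y * v z + v y * w z)`. Summing over `y` and `z` gives `2 W V M / β`.
-/

open Finset Real

theorem Real.sinh_le_mul_cosh {x : ℝ} (hx : 0 ≤ x) : sinh x ≤ x * cosh x := by
  have hmono : Monotone fun x : ℝ => x * cosh x - sinh x := by
    refine monotone_of_hasDerivAt_nonneg (f' := fun x => x * sinh x) (fun x => ?_) fun x => ?_
    · simpa using ((hasDerivAt_id' x).fun_mul (hasDerivAt_cosh x)).fun_sub (hasDerivAt_sinh x)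
    · rcases le_total 0 x with h | h
      · exact mul_nonneg h (sinh_nonneg_iff.2 h)
      · exact mul_nonneg_of_nonpos_of_nonpos h (sinh_nonpos_iff.2 h)
  simpa using hmono hx

theorem Real.abs_sinh_le_mul_cosh (x : ℝ) : |sinh x| ≤ |x| * cosh x := by
  rw [abs_sinh, ← cosh_abs]
  exact sinh_le_mul_cosh (abs_nonneg x)

-- The trapezoid rule overestimates `exp a - exp b = ∫ x in b..a, exp x`, since `exp` is convex.
theorem Real.abs_exp_sub_exp_le (a b : ℝ) :
    |exp a - exp b| ≤ |a - b| / 2 * (exp a + exp b) := by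
  have ha : exp a = exp ((a + b) / 2) * exp ((a - b) / 2) := by rw [← exp_add]; ring_nf
  have hb : exp b = exp ((a + b) / 2) * exp (-((a - b) / 2)) := by rw [← exp_add]; ring_nf
  set m := (a + b) / 2
  set d := (a - b) / 2
  have hsub : exp a - exp b = 2 * exp m * sinh d := by rw [ha, hb, sinh_eq]; ring
  have hadd : exp a + exp b = 2 * exp m * cosh d := by rw [ha, hb, cosh_eq]; ring
  have hd : |a - b| / 2 = |d| := by simp [d, abs_div]
  rw [hsub, hadd, hd, abs_mul, abs_of_pos (by positivity)]
  nlinarith [abs_sinh_le_mul_cosh d, exp_pos m]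

theorem sum_abs_div_sum_sub_div_sum_le {ι : Type*} [Fintype ι] (w v : ι → ℝ)
    (hw : 0 < ∑ i, w i) (hv : 0 < ∑ i, v i) {C : ℝ}
    (h : ∀ i j, |w i * v j - v i * w j| ≤ C * (w i * v j + v i * w j)) :
    ∑ i, |w i / ∑ j, w j - v i / ∑ j, v j| ≤ 2 * C := by
  set W := ∑ j, w j
  set V := ∑ j, v j
  have hWV : 0 < W * V := mul_pos hw hv
  calc ∑ i, |w i / W - v i / V|
      = (∑ i, |∑ j, (w i * v j - v i * w j)|) / (W * V) := by
        rw [sum_div]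
        refine sum_congr rfl fun i _ => ?_
        have hdiff : w i / W - v i / V = (w i * V - v i * W) / (W * V) := by field_simp
        rw [hdiff, abs_div, abs_of_pos hWV, sum_sub_distrib, ← mul_sum, ← mul_sum]
      _ ≤ (∑ i, ∑ j, C * (w i * v j + v i * w j)) / (W * V) := by
        gcongr with i
        exact (abs_sum_le_sum_abs _ _).trans (sum_le_sum fun j _ => h i j)
      _ = 2 * C := by
        simp only [mul_add, sum_add_distrib, ← mul_sum, ← sum_mul]
        field_simp
        ring

noncomputable def expTilt {ι : Type*} (p s : ι → ℝ) (i : ι) : ℝ := p i * exp (s i)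

theorem abs_expTilt_mul_sub_le {ι : Type*} (p s t : ι → ℝ) (hp : ∀ i, 0 ≤ p i) {δ : ℝ}
    (hδ : ∀ i, |s i - t i| ≤ δ) (i j : ι) :
    |expTilt p s i * expTilt p t j - expTilt p t i * expTilt p s j| ≤
      δ * (expTilt p s i * expTilt p t j + expTilt p t i * expTilt p s j) := by
  have hc : 0 ≤ p i * p j := mul_nonneg (hp i) (hp j)
  have hst : expTilt p s i * expTilt p t j = p i * p j * exp (s i + t j) := by
    rw [expTilt, expTilt, exp_add]; ring
  have hts : expTilt p t i * expTilt p s j = p i * p j * exp (t i + s j) := by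
    rw [expTilt, expTilt, exp_add]; ring
  have hgap : |(s i + t j) - (t i + s j)| / 2 ≤ δ := by
    have := abs_sub (s i - t i) (s j - t j)
    rw [show s i + t j - (t i + s j) = (s i - t i) - (s j - t j) by ring]
    linarith [hδ i, hδ j]
  rw [hst, hts, ← mul_sub, ← mul_add, abs_mul, abs_of_nonneg hc, mul_left_comm]
  gcongr
  exact (abs_exp_sub_exp_le _ _).trans (by gcongr)

theorem gibbs_lipschitz_in_reward_general
    {Y : Type*} [Fintype Y] [Nonempty Y]
    (πref : Y → ℝ) (hpos : ∀ y, 0 < πref y)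
    (β : ℝ) (hβ : 0 < β) (r r' : Y → ℝ)
    (ν ν' : Y → ℝ)
    (hν : ∀ y, ν y = πref y * Real.exp (r y / β) /
      (∑ y', πref y' * Real.exp (r y' / β)))
    (hν' : ∀ y, ν' y = πref y * Real.exp (r' y / β) /
      (∑ y', πref y' * Real.exp (r' y' / β))) :
    ∑ y, |ν y - ν' y| ≤
      (2 / β) * Finset.univ.sup' Finset.univ_nonempty (fun y => |r y - r' y|) := by
  set M := univ.sup' univ_nonempty fun y => |r y - r' y|
  have hM : ∀ y, |r y / β - r' y / β| ≤ M / β := fun y => by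
    rw [← sub_div, abs_div, abs_of_pos hβ]
    exact div_le_div_of_nonneg_right (le_sup' (fun y => |r y - r' y|) (mem_univ y)) hβ.le
  have hZ : ∀ s : Y → ℝ, 0 < ∑ y, expTilt πref s y := fun s =>
    sum_pos (fun y _ => mul_pos (hpos y) (exp_pos _)) univ_nonempty
  calc ∑ y, |ν y - ν' y|
      = ∑ y, |expTilt πref (r · / β) y / ∑ z, expTilt πref (r · / β) z -
          expTilt πref (r' · / β) y / ∑ z, expTilt πref (r' · / β) z| := by
        simp only [hν, hν', expTilt]
    _ ≤ 2 * (M / β) := sum_abs_div_sum_sub_div_sum_le _ _ (hZ _) (hZ _)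
        (abs_expTilt_mul_sub_le πref _ _ (fun y => (hpos y).le) hM)
    _ = 2 / β * M := by ring

/-- Gibbs distributions are Lipschitz in their rewards in total variation. -/
theorem gibbs_lipschitz_in_reward
    {Y : Type*} [Fintype Y] [Nonempty Y]
    (πref : Y → ℝ) (hpos : ∀ y, 0 < πref y) (hsum : ∑ y, πref y = 1)
    (β : ℝ) (hβ : 0 < β) (r r' : Y → ℝ)
    (ν ν' : Y → ℝ)
    (hν : ∀ y, ν y = πref y * Real.exp (r y / β) /
      (∑ y', πref y' * Real.exp (r y' / β)))
    (hν' : ∀ y, ν' y = πref y * Real.exp (r' y / β) /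
      (∑ y', πref y' * Real.exp (r' y' / β))) :
    ∑ y, |ν y - ν' y| ≤
      (2 / β) * Finset.univ.sup' Finset.univ_nonempty (fun y => |r y - r' y|) :=
  gibbs_lipschitz_in_reward_general πref hpos β hβ r r' ν ν' hν hν'
end

section
/- Combining the pessimism decomposition with a confidence ellipsoid: if C = {θ : ‖θ − θ̂‖_{Σ} ≤ η} contains θ*, π* maximizes ⟨v(π), θ*⟩ over Π, and π̂ maximizes min_{θ∈C}⟨v(π), θ⟩, then ⟨v(π*), θ*⟩ − ⟨v(π̂), θ*⟩ ≤ 2η · ‖v(π*)‖_{Σ^{-1}}. -/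
/-!
Write `‖x‖_M = √(xᵀ M x)`. For `θ` in the ellipsoid `‖θ - θ̂‖_Σ ≤ η`, Cauchy–Schwarz in the
dual pair `(‖·‖_Σ, ‖·‖_{Σ⁻¹})` gives `|⟨w, θ⟩ - ⟨w, θ̂⟩| ≤ η ‖w‖_{Σ⁻¹}`. Hence the pessimistic value
of `π*` is at least `⟨v(π*), θ̂⟩ - η ‖v(π*)‖_{Σ⁻¹} ≥ ⟨v(π*), θ*⟩ - 2η ‖v(π*)‖_{Σ⁻¹}`, while,
since `θ*` lies in the ellipsoid, the pessimistic value of `π̂` is at most `⟨v(π̂), θ*⟩`.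
As `π̂` maximizes the pessimistic value, the two bounds combine to the claim.
-/

open Matrix

section

variable {n : Type*} [Fintype n]

def ellipsoid (M : Matrix n n ℝ) (c : n → ℝ) (r : ℝ) : Set (n → ℝ) :=
  {θ | √((θ - c) ⬝ᵥ M *ᵥ (θ - c)) ≤ r}

theorem mem_ellipsoid_comm {M : Matrix n n ℝ} {a b : n → ℝ} {r : ℝ} :
    a ∈ ellipsoid M b r ↔ b ∈ ellipsoid M a r := by
  simp only [ellipsoid, Set.mem_ofPred_eq, ← neg_sub a b, mulVec_neg, neg_dotProduct,
    dotProduct_neg, neg_neg]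

theorem Matrix.PosSemidef.dotProduct_mulVec_sq_le [DecidableEq n] {M : Matrix n n ℝ}
    (hM : M.PosSemidef) (x y : n → ℝ) :
    (x ⬝ᵥ M *ᵥ y) ^ 2 ≤ (x ⬝ᵥ M *ᵥ x) * (y ⬝ᵥ M *ᵥ y) := by
  simpa only [toBilin'_apply'] using (toBilin' M).apply_sq_le_of_symm
    (by simpa only [toBilin'_apply', star_trivial] using hM.dotProduct_mulVec_nonneg)
    (LinearMap.BilinForm.isSymm_iff.1 <|
      isSymm_toBilin'_iff_isSymm.2 (isHermitian_iff_isSymm.1 hM.isHermitian)) x y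

theorem Matrix.PosDef.abs_dotProduct_le [DecidableEq n] {M : Matrix n n ℝ} (hM : M.PosDef)
    (w u : n → ℝ) : |w ⬝ᵥ u| ≤ √(w ⬝ᵥ M⁻¹ *ᵥ w) * √(u ⬝ᵥ M *ᵥ u) := by
  have hinv : M⁻¹ * M = 1 := nonsing_inv_mul M ((isUnit_iff_isUnit_det M).1 hM.isUnit)
  have hcs := hM.inv.posSemidef.dotProduct_mulVec_sq_le w (M *ᵥ u)
  rw [mulVec_mulVec, hinv, one_mulVec, dotProduct_comm (M *ᵥ u) u] at hcs
  rw [← Real.sqrt_mul (by simpa using hM.inv.posSemidef.dotProduct_mulVec_nonneg w)]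
  exact Real.abs_le_sqrt hcs

theorem abs_dotProduct_sub_le_of_mem_ellipsoid [DecidableEq n] {M : Matrix n n ℝ}
    (hM : M.PosDef) {c θ : n → ℝ} {r : ℝ} (hθ : θ ∈ ellipsoid M c r) (w : n → ℝ) :
    |w ⬝ᵥ θ - w ⬝ᵥ c| ≤ r * √(w ⬝ᵥ M⁻¹ *ᵥ w) := by
  rw [← dotProduct_sub, mul_comm]
  exact (hM.abs_dotProduct_le w (θ - c)).trans
    (mul_le_mul_of_nonneg_left hθ (Real.sqrt_nonneg _))

theorem dotProduct_sub_le_of_mem_ellipsoid [DecidableEq n] {M : Matrix n n ℝ}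
    (hM : M.PosDef) {c θ : n → ℝ} {r : ℝ} (hθ : θ ∈ ellipsoid M c r) (w : n → ℝ) :
    w ⬝ᵥ c - r * √(w ⬝ᵥ M⁻¹ *ᵥ w) ≤ w ⬝ᵥ θ := by
  linarith [neg_abs_le (w ⬝ᵥ θ - w ⬝ᵥ c), abs_dotProduct_sub_le_of_mem_ellipsoid hM hθ w]

theorem le_csInf_dotProduct_ellipsoid [DecidableEq n] {M : Matrix n n ℝ} (hM : M.PosDef)
    {c : n → ℝ} {r : ℝ} (hne : (ellipsoid M c r).Nonempty) (w : n → ℝ) :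
    w ⬝ᵥ c - r * √(w ⬝ᵥ M⁻¹ *ᵥ w) ≤ sInf {x | ∃ θ ∈ ellipsoid M c r, x = w ⬝ᵥ θ} := by
  obtain ⟨θ₀, hθ₀⟩ := hne
  refine le_csInf ⟨_, θ₀, hθ₀, rfl⟩ ?_
  rintro _ ⟨θ, hθ, rfl⟩
  exact dotProduct_sub_le_of_mem_ellipsoid hM hθ w

theorem csInf_dotProduct_ellipsoid_le [DecidableEq n] {M : Matrix n n ℝ} (hM : M.PosDef)
    {c θ : n → ℝ} {r : ℝ} (hθ : θ ∈ ellipsoid M c r) (w : n → ℝ) :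
    sInf {x | ∃ θ ∈ ellipsoid M c r, x = w ⬝ᵥ θ} ≤ w ⬝ᵥ θ := by
  refine csInf_le ⟨w ⬝ᵥ c - r * √(w ⬝ᵥ M⁻¹ *ᵥ w), ?_⟩ ⟨θ, hθ, rfl⟩
  rintro _ ⟨θ', hθ', rfl⟩
  exact dotProduct_sub_le_of_mem_ellipsoid hM hθ' w

end

theorem pessimism_ellipsoid_suboptimality_general
    {d : ℕ} {P : Type*}
    (S : Matrix (Fin d) (Fin d) ℝ) (hS : S.PosDef)
    (θhat θstar : Fin d → ℝ) (η : ℝ)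
    (hconf : Real.sqrt ((θhat - θstar) ⬝ᵥ S.mulVec (θhat - θstar)) ≤ η)
    (C : Set (Fin d → ℝ))
    (hC : C = {θ | Real.sqrt ((θ - θhat) ⬝ᵥ S.mulVec (θ - θhat)) ≤ η})
    (v : P → Fin d → ℝ)
    (πstar : P)
    (Jhat : P → ℝ) (hJhat : ∀ π, Jhat π = sInf {x : ℝ | ∃ θ ∈ C, x = v π ⬝ᵥ θ})
    (πhat : P) (hπhat : ∀ π, Jhat π ≤ Jhat πhat) :
    v πstar ⬝ᵥ θstar - v πhat ⬝ᵥ θstar ≤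
      2 * η * Real.sqrt (v πstar ⬝ᵥ S⁻¹.mulVec (v πstar)) := by
  change C = ellipsoid S θhat η at hC
  subst hC
  have hθstar : θstar ∈ ellipsoid S θhat η := mem_ellipsoid_comm.1 hconf
  have hcenter : v πstar ⬝ᵥ θstar - v πstar ⬝ᵥ θhat ≤
      η * √(v πstar ⬝ᵥ S⁻¹ *ᵥ v πstar) :=
    (le_abs_self _).trans (abs_dotProduct_sub_le_of_mem_ellipsoid hS hθstar _)
  have hlower : v πstar ⬝ᵥ θhat - η * √(v πstar ⬝ᵥ S⁻¹ *ᵥ v πstar) ≤ Jhat πstar :=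
    hJhat πstar ▸ le_csInf_dotProduct_ellipsoid hS ⟨θstar, hθstar⟩ _
  have hpessimism : Jhat πhat ≤ v πhat ⬝ᵥ θstar :=
    hJhat πhat ▸ csInf_dotProduct_ellipsoid_le hS hθstar _
  linarith [hπhat πstar]

/-- Pessimism with a confidence ellipsoid: the suboptimality of the pessimistic policy
is at most 2η‖v(π*)‖_{Σ⁻¹}. -/
theorem pessimism_ellipsoid_suboptimality
    {d : ℕ} {P : Type*} [Nonempty P]
    (S : Matrix (Fin d) (Fin d) ℝ) (hS : S.PosDef)
    (θhat θstar : Fin d → ℝ) (η : ℝ) (hη : 0 ≤ η)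
    (hconf : Real.sqrt ((θhat - θstar) ⬝ᵥ S.mulVec (θhat - θstar)) ≤ η)
    (C : Set (Fin d → ℝ))
    (hC : C = {θ | Real.sqrt ((θ - θhat) ⬝ᵥ S.mulVec (θ - θhat)) ≤ η})
    (v : P → Fin d → ℝ)
    (πstar : P) (hπstar : ∀ π, v π ⬝ᵥ θstar ≤ v πstar ⬝ᵥ θstar)
    (Jhat : P → ℝ) (hJhat : ∀ π, Jhat π = sInf {x : ℝ | ∃ θ ∈ C, x = v π ⬝ᵥ θ})
    (πhat : P) (hπhat : ∀ π, Jhat π ≤ Jhat πhat) :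
    v πstar ⬝ᵥ θstar - v πhat ⬝ᵥ θstar ≤
      2 * η * Real.sqrt (v πstar ⬝ᵥ S⁻¹.mulVec (v πstar)) :=
  pessimism_ellipsoid_suboptimality_general S hS θhat θstar η hconf C hC v πstar Jhat hJhat πhat
    hπhat
end
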